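/- Let P be a Markov transition kernel on (X, 𝓑) with nonempty atom α ∈ 𝓑, let π be an invariant probability measure for P with π(α) > 0, and let g : X → [0, ∞) be measurable with π(g) < ∞. Define a_x(n) := ₍α₎P^n(x, α), u(n) := P^n(α, α) for n ≥ 1 with u(0) := 1, and t_g(n) := ₍α₎P^n(α, g) := ∫ ₍α₎P^n(α, dy) g(y). Assume the representation π(g) = π(α) Σ_{k=1}^∞ t_g(k) holds. Then for every x ∈ X and every n ≥ 1, |P^n(x, g) − π(g)| ≤ ₍α₎P^n(x, g) + Σ_{m=0}^{n−1} |(a_x * u)(m) − π(α)| · t_g(n−m) + π(α) Σ_{k=n+1}^∞ t_g(k), where (a_x * u)(m) := Σ_{i=1}^{m} a_x(i) u(m−i) for m ≥ 1 and (a_x * u)(0) := 0. -/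

import Mathlib

/-!
Cutting a path from `x` at its last visit to the atom before time `n`, and using that the chain
restarts with the same law at every visit, gives the last-exit decomposition
`Pⁿ(x,·) = ₍α₎Pⁿ(x,·) + Σ_{0<m<n} Pᵐ(x,α) ₍α₎P^{n-m}(α,·)`. On `α` itself it says that
`m ↦ Pᵐ(x,α)` solves the renewal equation `b = a_x + b * ₍α₎P^·(α,α)`, whose unique solution is
`a_x * u`. Splitting the representation of `π(g)` at `n` as
`Σ_{m<n} π(α) t_g(n-m) + π(α) Σ_{k>n} t_g(k)` and comparing term by term gives the bound.
-/

/- All quantities live in `[0,∞]`, and `eabs` uses truncated subtraction. The common values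
`Pᵐ(α,·)`, `₍α₎Pᵐ(α,·)` over the atom are those at the point `x₀ ∈ α`; `u(0) = P⁰(x₀,α) = 1`. -/

open MeasureTheory ProbabilityTheory ENNReal Finset

/-- The `n`-step transition kernel `P^n` (with `P⁰ = id`, i.e. `P⁰(x,·) = δ_x`). -/
noncomputable def nstep {X : Type*} [MeasurableSpace X] (P : Kernel X X) : ℕ → Kernel X X
  | 0 => Kernel.id
  | n + 1 => P ∘ₖ nstep P n

/-- The taboo kernels `₍B₎Pⁿ`. -/
noncomputable def tabooKernel {X : Type*} [MeasurableSpace X] (P : Kernel X X) {B : Set X}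
    (hB : MeasurableSet B) : ℕ → Kernel X X
  | 0 => Kernel.id
  | 1 => P
  | n + 2 => P ∘ₖ (tabooKernel P hB (n + 1)).restrict hB.compl

/-- Absolute difference in `[0,∞]`. -/
noncomputable def eabs (a b : ℝ≥0∞) : ℝ≥0∞ := max (a - b) (b - a)

section Renewal

variable {R : Type*} [CommSemiring R] {a t u : ℕ → R}

lemma renewal_unique {b c : ℕ → R}
    (hb : ∀ m ≠ 0, b m = a m + ∑ j ∈ Ico 1 m, b j * t (m - j))
    (hc : ∀ m ≠ 0, c m = a m + ∑ j ∈ Ico 1 m, c j * t (m - j)) {m : ℕ} (hm : m ≠ 0) :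
    b m = c m := by
  induction m using Nat.strong_induction_on with
  | _ m ih =>
    rw [hb m hm, hc m hm]
    refine congrArg _ (sum_congr rfl fun j hj ↦ ?_)
    rw [mem_Ico] at hj
    rw [ih j hj.2 (by omega)]

variable (hu0 : u 0 = 1) (hu : ∀ k ≠ 0, u k = t k + ∑ j ∈ Ico 1 k, u j * t (k - j))
include hu0 hu

lemma renewal_eq_sum_range {k : ℕ} (hk : k ≠ 0) : u k = ∑ l ∈ range k, u l * t (k - l) := by
  rw [range_eq_Ico, sum_eq_sum_Ico_succ_bot (Nat.pos_of_ne_zero hk), hu0, one_mul,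
    Nat.sub_zero, hu k hk]

lemma conv_renewal_eq {m : ℕ} (hm : m ≠ 0) :
    ∑ i ∈ Icc 1 m, a i * u (m - i)
      = a m + ∑ j ∈ Ico 1 m, (∑ i ∈ Icc 1 j, a i * u (j - i)) * t (m - j) := by
  have hinner : ∀ i ∈ Ico 1 m, ∑ j ∈ Ico i m, u (j - i) * t (m - j) = u (m - i) := by
    intro i hi
    rw [mem_Ico] at hi
    rw [renewal_eq_sum_range hu0 hu (by omega), sum_Ico_eq_sum_range]
    refine sum_congr rfl fun l _ ↦ ?_
    rw [Nat.add_sub_cancel_left, Nat.sub_add_eq]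
  calc ∑ i ∈ Icc 1 m, a i * u (m - i)
      = a m + ∑ i ∈ Ico 1 m, a i * ∑ j ∈ Ico i m, u (j - i) * t (m - j) := by
        rw [← Ico_add_one_right_eq_Icc, sum_Ico_succ_top (by omega), Nat.sub_self, hu0,
          mul_one, add_comm, sum_congr rfl fun i hi ↦ by rw [← hinner i hi]]
    _ = a m + ∑ j ∈ Ico 1 m, ∑ i ∈ Icc 1 j, a i * (u (j - i) * t (m - j)) := by
        simp_rw [mul_sum]
        rw [sum_comm' (t' := Ico 1 m) (s' := fun j ↦ Icc 1 j) fun i j ↦ by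
          simp only [mem_Ico, mem_Icc]; omega]
    _ = a m + ∑ j ∈ Ico 1 m, (∑ i ∈ Icc 1 j, a i * u (j - i)) * t (m - j) := by
        simp_rw [sum_mul, mul_assoc]

lemma renewal_eq_conv {b : ℕ → R} (hb : ∀ m ≠ 0, b m = a m + ∑ j ∈ Ico 1 m, b j * t (m - j))
    {m : ℕ} (hm : m ≠ 0) : b m = ∑ i ∈ Icc 1 m, a i * u (m - i) :=
  renewal_unique hb (fun _ hk ↦ conv_renewal_eq hu0 hu hk) hm

end Renewal

namespace MeasureTheory.Measure

variable {X Y : Type*} [MeasurableSpace X] [MeasurableSpace Y]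

lemma comp_finsetSum {ι : Type*} (κ : Kernel X Y) (s : Finset ι) (μ : ι → Measure X) :
    κ ∘ₘ (∑ i ∈ s, μ i) = ∑ i ∈ s, κ ∘ₘ μ i := by
  classical
  induction s using Finset.induction_on with
  | empty => simp
  | insert i s hi ih => rw [sum_insert hi, sum_insert hi, comp_add, ih]

lemma comp_restrict_of_forall_eq (κ : Kernel X Y) (μ : Measure X) {s : Set X}
    (hs : MeasurableSet s) {ν : Measure Y} (hκ : ∀ x ∈ s, κ x = ν) :
    κ ∘ₘ μ.restrict s = μ s • ν := by
  ext t ht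
  rw [bind_apply ht κ.aemeasurable, setLIntegral_congr_fun hs fun x hx ↦ by rw [hκ x hx]]
  simp [mul_comm]

end MeasureTheory.Measure

section Kernel

variable {X : Type*} [MeasurableSpace X] (P : Kernel X X)

lemma nstep_one : nstep P 1 = P := Kernel.comp_id P

lemma nstep_succ_apply (n : ℕ) (x : X) : nstep P (n + 1) x = P ∘ₘ nstep P n x :=
  Kernel.comp_apply _ _ _

lemma nstep_zero_apply_of_mem {s : Set X} (hs : MeasurableSet s) {x : X} (hx : x ∈ s) :
    nstep P 0 x s = 1 := by
  simp [nstep, Kernel.id_apply, Measure.dirac_apply' _ hs, hx]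

variable {α : Set X} (hα : MeasurableSet α)

lemma tabooKernel_one : tabooKernel P hα 1 = P := rfl

lemma tabooKernel_succ_apply {n : ℕ} (hn : n ≠ 0) (x : X) :
    tabooKernel P hα (n + 1) x = P ∘ₘ (tabooKernel P hα n x).restrict αᶜ := by
  obtain ⟨n, rfl⟩ := Nat.exists_eq_succ_of_ne_zero hn
  rw [tabooKernel, Kernel.comp_apply, Kernel.restrict_apply]

variable {P} {x₀ : X} (hatom : ∀ y ∈ α, P y = P x₀)
include hatom

lemma comp_tabooKernel_apply {k : ℕ} (hk : k ≠ 0) (z : X) :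
    P ∘ₘ tabooKernel P hα k z = tabooKernel P hα (k + 1) z + tabooKernel P hα k z α • P x₀ := by
  conv_lhs => rw [← Measure.restrict_add_restrict_compl (μ := tabooKernel P hα k z) hα]
  rw [Measure.comp_add, Measure.comp_restrict_of_forall_eq _ _ hα hatom,
    tabooKernel_succ_apply P hα hk, add_comm]

theorem nstep_apply_eq_tabooKernel_add_sum {n : ℕ} (hn : n ≠ 0) (x : X) :
    nstep P n x = tabooKernel P hα n x
      + ∑ m ∈ Ico 1 n, nstep P m x α • tabooKernel P hα (n - m) x₀ := by
  induction n with
  | zero => contradiction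
  | succ n ih =>
    rcases eq_or_ne n 0 with rfl | hn
    · simp [nstep_one, tabooKernel_one]
    have ih := ih hn
    have hmass : nstep P n x α = tabooKernel P hα n x α
        + ∑ m ∈ Ico 1 n, nstep P m x α * tabooKernel P hα (n - m) x₀ α := by
      rw [ih]
      simp
    have hstep : ∀ m ∈ Ico 1 n, P ∘ₘ (nstep P m x α • tabooKernel P hα (n - m) x₀)
        = nstep P m x α • tabooKernel P hα (n + 1 - m) x₀
          + (nstep P m x α * tabooKernel P hα (n - m) x₀ α) • P x₀ := by
      intro m hm
      rw [mem_Ico] at hm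
      rw [Measure.comp_smul, comp_tabooKernel_apply hα hatom (by omega), smul_add, smul_smul,
        Nat.sub_add_comm hm.2.le]
    rw [nstep_succ_apply, ih, Measure.comp_add, Measure.comp_finsetSum,
      comp_tabooKernel_apply hα hatom hn, sum_congr rfl hstep, sum_add_distrib, ← sum_smul,
      sum_Ico_succ_top (by omega), Nat.add_sub_cancel_left, tabooKernel_one, hmass, add_smul]
    abel

theorem nstep_apply_eq_tabooKernel_apply_add_sum {n : ℕ} (hn : n ≠ 0) (x : X) :
    nstep P n x α = tabooKernel P hα n x α
      + ∑ m ∈ Ico 1 n, nstep P m x α * tabooKernel P hα (n - m) x₀ α := by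
  rw [nstep_apply_eq_tabooKernel_add_sum hα hatom hn x]
  simp

theorem lintegral_nstep_eq (hx₀ : x₀ ∈ α) {n : ℕ} (hn : n ≠ 0)
    (x : X) (g : X → ℝ≥0∞) :
    ∫⁻ y, g y ∂nstep P n x = ∫⁻ y, g y ∂tabooKernel P hα n x
      + ∑ m ∈ range n, (∑ i ∈ Icc 1 m, tabooKernel P hα i x α * nstep P (m - i) x₀ α)
          * ∫⁻ y, g y ∂tabooKernel P hα (n - m) x₀ := by
  have hfirst (m : ℕ) (hm : m ≠ 0) :
      nstep P m x α = ∑ i ∈ Icc 1 m, tabooKernel P hα i x α * nstep P (m - i) x₀ α :=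
    renewal_eq_conv (nstep_zero_apply_of_mem P hα hx₀)
      (fun _ hk ↦ nstep_apply_eq_tabooKernel_apply_add_sum hα hatom hk x₀)
      (fun _ hk ↦ nstep_apply_eq_tabooKernel_apply_add_sum hα hatom hk x) hm
  rw [nstep_apply_eq_tabooKernel_add_sum hα hatom hn x, lintegral_add_measure,
    lintegral_finsetSum_measure, range_eq_Ico, sum_eq_sum_Ico_succ_bot (Nat.pos_of_ne_zero hn),
    Icc_eq_empty_of_lt zero_lt_one, sum_empty, zero_mul, zero_add]
  refine congrArg _ (sum_congr rfl fun m hm ↦ ?_)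
  rw [lintegral_smul_measure, smul_eq_mul, hfirst m (by rw [mem_Ico] at hm; omega)]

end Kernel

lemma tsum_add_one_eq_sum_range_add_tsum {M : Type*} [AddCommMonoid M] [TopologicalSpace M]
    [T2Space M] [ContinuousAdd M] {f : ℕ → M} (n : ℕ) (hf : Summable fun k ↦ f (k + n + 1)) :
    ∑' k, f (k + 1) = ∑ m ∈ range n, f (n - m) + ∑' k, f (n + 1 + k) := by
  rw [← Summable.sum_add_tsum_nat_add' (f := fun k ↦ f (k + 1)) hf, ← sum_range_reflect]
  congr 1
  · refine sum_congr rfl fun m hm ↦ congrArg f ?_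
    rw [mem_range] at hm
    omega
  · exact tsum_congr fun k ↦ congrArg f (by ring)

section Eabs

lemma eabs_zero_left (a : ℝ≥0∞) : eabs 0 a = a := by simp [eabs]

lemma eabs_zero_right (a : ℝ≥0∞) : eabs a 0 = a := by simp [eabs]

lemma eabs_add_le (a b c d : ℝ≥0∞) : eabs (a + b) (c + d) ≤ eabs a c + eabs b d :=
  max_le (add_tsub_add_le_tsub_add_tsub.trans (add_le_add (le_max_left _ _) (le_max_left _ _)))
    (add_tsub_add_le_tsub_add_tsub.trans (add_le_add (le_max_right _ _) (le_max_right _ _)))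

lemma eabs_mul_right_le (a b c : ℝ≥0∞) : eabs (a * c) (b * c) ≤ eabs a b * c :=
  max_le (le_tsub_mul.trans (by gcongr; exact le_max_left _ _))
    (le_tsub_mul.trans (by gcongr; exact le_max_right _ _))

lemma eabs_sum_le {ι : Type*} (s : Finset ι) (f g : ι → ℝ≥0∞) :
    eabs (∑ i ∈ s, f i) (∑ i ∈ s, g i) ≤ ∑ i ∈ s, eabs (f i) (g i) := by
  classical
  induction s using Finset.induction_on with
  | empty => simp [eabs]
  | insert i s hi ih =>
    simp only [sum_insert hi]
    exact (eabs_add_le _ _ _ _).trans (add_le_add_right ih _)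

lemma eabs_add_sum_mul_le {ι : Type*} (s : Finset ι) (a c d : ℝ≥0∞) (f w : ι → ℝ≥0∞) :
    eabs (a + ∑ i ∈ s, f i * w i) (∑ i ∈ s, c * w i + d)
      ≤ a + ∑ i ∈ s, eabs (f i) c * w i + d :=
  calc eabs (a + ∑ i ∈ s, f i * w i) (∑ i ∈ s, c * w i + d)
      = eabs ((a + ∑ i ∈ s, f i * w i) + 0) ((0 + ∑ i ∈ s, c * w i) + d) := by
        rw [add_zero, zero_add]
    _ ≤ eabs a 0 + eabs (∑ i ∈ s, f i * w i) (∑ i ∈ s, c * w i) + eabs 0 d :=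
        (eabs_add_le _ _ _ _).trans (add_le_add_left (eabs_add_le _ _ _ _) _)
    _ ≤ a + ∑ i ∈ s, eabs (f i) c * w i + d := by
        rw [eabs_zero_left, eabs_zero_right]
        gcongr
        exact (eabs_sum_le _ _ _).trans (sum_le_sum fun i _ ↦ eabs_mul_right_le _ _ _)

end Eabs

theorem regenerative_bound_on_deviation_from_equilibrium_general
    {X : Type*} [MeasurableSpace X] (P : Kernel X X)
    {α : Set X} (hα : MeasurableSet α)
    (hatom : ∃ ν : Measure X, ∀ x ∈ α, P x = ν)
    (x₀ : X) (hx₀ : x₀ ∈ α)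
    (π : Measure X)
    (g : X → ℝ≥0∞)
    -- the representation `π(g) = π(α) Σ_{k=1}^∞ t_g(k)`
    (hrep : ∫⁻ y, g y ∂π
      = π α * ∑' k : ℕ, ∫⁻ y, g y ∂(tabooKernel P hα (k + 1) x₀)) :
    ∀ x : X, ∀ n : ℕ, 1 ≤ n →
      eabs (∫⁻ y, g y ∂(nstep P n x)) (∫⁻ y, g y ∂π)
        ≤ (∫⁻ y, g y ∂(tabooKernel P hα n x))
          + (∑ m ∈ Finset.range n,
              eabs (∑ i ∈ Finset.Icc 1 m, tabooKernel P hα i x α * nstep P (m - i) x₀ α)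
                  (π α)
                * ∫⁻ y, g y ∂(tabooKernel P hα (n - m) x₀))
          + π α * ∑' k : ℕ, ∫⁻ y, g y ∂(tabooKernel P hα (n + 1 + k) x₀) := by
  obtain ⟨ν, hν⟩ := hatom
  have hP (y : X) (hy : y ∈ α) : P y = P x₀ := (hν y hy).trans (hν x₀ hx₀).symm
  intro x n hn
  rw [lintegral_nstep_eq hα hP hx₀ (by omega) x g, hrep,
    tsum_add_one_eq_sum_range_add_tsum (f := fun k ↦ ∫⁻ y, g y ∂tabooKernel P hα k x₀) n
      ENNReal.summable, mul_add, mul_sum]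
  exact eabs_add_sum_mul_le _ _ _ _ _ _

theorem regenerative_bound_on_deviation_from_equilibrium
    {X : Type*} [MeasurableSpace X] (P : Kernel X X) [IsMarkovKernel P]
    {α : Set X} (hα : MeasurableSet α)
    (hatom : ∃ ν : Measure X, ∀ x ∈ α, P x = ν)
    (x₀ : X) (hx₀ : x₀ ∈ α)
    (π : Measure X) [IsProbabilityMeasure π] (hπinv : Kernel.Invariant P π)
    (hπα : 0 < π α)
    (g : X → ℝ≥0∞) (hg : Measurable g) (hgπ : ∫⁻ y, g y ∂π < ∞)
    -- the representation `π(g) = π(α) Σ_{k=1}^∞ t_g(k)`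
    (hrep : ∫⁻ y, g y ∂π
      = π α * ∑' k : ℕ, ∫⁻ y, g y ∂(tabooKernel P hα (k + 1) x₀)) :
    ∀ x : X, ∀ n : ℕ, 1 ≤ n →
      eabs (∫⁻ y, g y ∂(nstep P n x)) (∫⁻ y, g y ∂π)
        ≤ (∫⁻ y, g y ∂(tabooKernel P hα n x))
          + (∑ m ∈ Finset.range n,
              eabs (∑ i ∈ Finset.Icc 1 m, tabooKernel P hα i x α * nstep P (m - i) x₀ α)
                  (π α)
                * ∫⁻ y, g y ∂(tabooKernel P hα (n - m) x₀))
          + π α * ∑' k : ℕ, ∫⁻ y, g y ∂(tabooKernel P hα (n + 1 + k) x₀) :=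
  regenerative_bound_on_deviation_from_equilibrium_general P hα hatom x₀ hx₀ π g hrep
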